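/- Let A be a locally finite hyperplane arrangement in ℝⁿ, x₀ a generic point, and for each chamber C let x_C = proj_C(x₀) and F_C the smallest face of C containing x_C. If ≺ is any Euclidean order with base point x₀ (a total order on chambers such that C ≺ C' implies dist(x₀,C) ≤ dist(x₀,C')), then for every chamber C, the ideal J(C) = { X ∈ L(A) : supp(X) ∩ s(C,C') ≠ ∅ for all C' ≺ C } is the principal upper ideal of the intersection poset generated by X_C = |F_C|. In particular every Euclidean order is valid. -/

import Mathlib

open Metric Set MeasureTheory

noncomputable section

/-- A locally finite arrangement of affine hyperplanes in ℝⁿ, given by affine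
equations `⟪a i, x⟫ = b i` with `a i ≠ 0`, indexed injectively by `ι`. -/
structure Arrangement (n : ℕ) (ι : Type) where
  a : ι → EuclideanSpace ℝ (Fin n)
  b : ι → ℝ
  ha : ∀ i, a i ≠ 0
  inj : Function.Injective fun i => {x : EuclideanSpace ℝ (Fin n) | (inner ℝ (a i) x : ℝ) = b i}
  locFin : ∀ x : EuclideanSpace ℝ (Fin n), ∃ ε > 0,
    {i : ι | ∃ y ∈ Metric.ball x ε, (inner ℝ (a i) y : ℝ) = b i}.Finite

namespace Arrangement

variable {n : ℕ} {ι : Type} (A : Arrangement n ι)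

/-- The defining affine functional of the `i`-th hyperplane. -/
def val (i : ι) (x : EuclideanSpace ℝ (Fin n)) : ℝ := (inner ℝ (A.a i) x : ℝ) - A.b i

/-- The `i`-th hyperplane. -/
def hyperplane (i : ι) : Set (EuclideanSpace ℝ (Fin n)) := {x | A.val i x = 0}

/-- The sign vector of a point. -/
def signAt (x : EuclideanSpace ℝ (Fin n)) : ι → SignType := fun i => SignType.sign (A.val i x)

/-- The (relatively open) stratum with sign vector `σ`. -/
def openCell (σ : ι → SignType) : Set (EuclideanSpace ℝ (Fin n)) :=
  {x | ∀ i, SignType.sign (A.val i x) = σ i}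

/-- The (closed) faces of the arrangement: closures of the strata. -/
def IsFace (F : Set (EuclideanSpace ℝ (Fin n))) : Prop :=
  ∃ x : EuclideanSpace ℝ (Fin n), F = closure (A.openCell (A.signAt x))

/-- Chambers: closed faces of codimension 0. -/
def IsChamber (C : Set (EuclideanSpace ℝ (Fin n))) : Prop :=
  ∃ x : EuclideanSpace ℝ (Fin n), (∀ i, A.val i x ≠ 0) ∧
    C = closure (A.openCell (A.signAt x))

/-- The support of a subset: the hyperplanes containing it. -/
def supp (U : Set (EuclideanSpace ℝ (Fin n))) : Set ι := {i | U ⊆ A.hyperplane i}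

/-- The set of hyperplanes separating two chambers. -/
def sep (C C' : Set (EuclideanSpace ℝ (Fin n))) : Set ι :=
  {i | ∀ x ∈ interior C, ∀ y ∈ interior C', A.val i x * A.val i y < 0}

/-- `F` is a face of the chamber (or face) `C`. -/
def IsFaceOf (F C : Set (EuclideanSpace ℝ (Fin n))) : Prop := A.IsFace F ∧ F ⊆ C

/-- `A.IsCF C F D` means `D = C.F`: `D` is the unique chamber containing `F` and not
separated from `C` by any hyperplane of `supp F`. -/
def IsCF (C F D : Set (EuclideanSpace ℝ (Fin n))) : Prop :=
  A.IsChamber D ∧ F ⊆ D ∧ A.sep C D ∩ A.supp F = ∅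

/-- `A.IsOpp D F E` means `E = D^F`: `E` is the chamber opposite to `D` with respect to
its face `F`, i.e. the hyperplanes separating `D` and `E` are exactly those containing `F`. -/
def IsOpp (D F E : Set (EuclideanSpace ℝ (Fin n))) : Prop :=
  A.IsChamber E ∧ F ⊆ E ∧ A.sep D E = A.supp F

/-- Flats: nonempty intersections of subfamilies of hyperplanes (including ℝⁿ itself). -/
def IsFlat (X : Set (EuclideanSpace ℝ (Fin n))) : Prop :=
  X.Nonempty ∧ ∃ s : Set ι, X = ⋂ i ∈ s, A.hyperplane i

/-- A cell `⟨C, F⟩` of the Salvetti complex: a chamber `C` together with a face `F` of `C`. -/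
structure Cell {n : ℕ} {ι : Type} (𝒜 : Arrangement n ι) where
  C : Set (EuclideanSpace ℝ (Fin n))
  F : Set (EuclideanSpace ℝ (Fin n))
  isChamber : 𝒜.IsChamber C
  isFace : 𝒜.IsFace F
  faceLe : F ⊆ C

/-- The Salvetti order: `⟨C,F⟩ ≤ ⟨D,G⟩` iff `F ⪯ G` (i.e. `F ⊇ G`) and `D.F = C`. -/
def cellLE (c d : A.Cell) : Prop := d.F ⊆ c.F ∧ A.IsCF d.C c.F c.C

/-- The subcomplex `S(C)`: cells `⟨D,F⟩` with `D = C.F`. -/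
def inS (C : Set (EuclideanSpace ℝ (Fin n))) (c : A.Cell) : Prop := A.IsCF C c.F c.C

/-- A strict total order on the chambers. -/
def IsChamberOrder (lt : Set (EuclideanSpace ℝ (Fin n)) → Set (EuclideanSpace ℝ (Fin n)) → Prop) :
    Prop :=
  (∀ C C', A.IsChamber C → A.IsChamber C' → C ≠ C' → lt C C' ∨ lt C' C) ∧
  (∀ C, ¬ lt C C) ∧
  (∀ C C' C'', lt C C' → lt C' C'' → lt C C'')

/-- The upper ideal `J(C)` of the poset of flats determined by a total order on chambers. -/
def J (lt : Set (EuclideanSpace ℝ (Fin n)) → Set (EuclideanSpace ℝ (Fin n)) → Prop)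
    (C : Set (EuclideanSpace ℝ (Fin n))) : Set (Set (EuclideanSpace ℝ (Fin n))) :=
  {X | A.IsFlat X ∧ ∀ C', A.IsChamber C' → lt C' C → (A.supp X ∩ A.sep C C').Nonempty}

/-- A valid order: for each chamber `C`, the ideal `J(C)` is the principal upper ideal
(in the poset of flats ordered by reverse inclusion) generated by `X_C = |F_C|` for some
face `F_C` of `C`. -/
def IsValidOrder
    (lt : Set (EuclideanSpace ℝ (Fin n)) → Set (EuclideanSpace ℝ (Fin n)) → Prop) : Prop :=
  A.IsChamberOrder lt ∧
  ∀ C, A.IsChamber C → ∃ F_C, A.IsFaceOf F_C C ∧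
    A.J lt C = {X | A.IsFlat X ∧ X ⊆ (affineSpan ℝ F_C : Set (EuclideanSpace ℝ (Fin n)))}

/-- Membership in `N(C)`: cells of `S(C)` not lying in any earlier `S(C')`. -/
def inN (lt : Set (EuclideanSpace ℝ (Fin n)) → Set (EuclideanSpace ℝ (Fin n)) → Prop)
    (C : Set (EuclideanSpace ℝ (Fin n))) (c : A.Cell) : Prop :=
  A.inS C c ∧ ∀ C', A.IsChamber C' → lt C' C → ¬ A.inS C' c

/-- A point `x₀` is generic with respect to `A`: (i) chambers at equal distance from `x₀`
have the same metric projection of `x₀`, lying in their intersection; (ii) distances to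
strictly comparable flats are strictly comparable. -/
def IsGeneric (x₀ : EuclideanSpace ℝ (Fin n)) : Prop :=
  (∀ C C', A.IsChamber C → A.IsChamber C' → infDist x₀ C = infDist x₀ C' →
    ∀ p ∈ C, ∀ p' ∈ C', (∀ q ∈ C, dist x₀ p ≤ dist x₀ q) →
      (∀ q ∈ C', dist x₀ p' ≤ dist x₀ q) → p = p' ∧ p ∈ C ∩ C') ∧
  (∀ L L', A.IsFlat L → A.IsFlat L' → L' ⊂ L → infDist x₀ L < infDist x₀ L')

end Arrangement

/-!
Write the chamber `C` as `sameSide univ w = {z | ∀ i, 0 ≤ val i w * val i z}` for a point `w`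
off all hyperplanes, and let `Z = supp {x_C}` be the hyperplanes through `x_C`. By local
finiteness only the hyperplanes of `Z` matter near `x_C`, so `x_C` is still the point nearest to
`x₀` on the larger cone `sameSide Z w`, and `|F_C|` is the flat `⋂ Z`.

If `X ⊆ ⋂ Z`, then `Z ⊆ supp X`; an earlier chamber `C'` not separated from `C` by `supp X` lies
in `sameSide Z w`, hence is exactly as far from `x₀` as `C`. Genericity (i) then puts `x_C` in
`C'`, so every hyperplane separating `C` from `C' ≠ C` passes through `x_C`, i.e. lies in `Z`:
a contradiction.

Conversely, if `X ∈ J(C)`, every chamber strictly closer to `x₀` than `C` comes earlier, so it is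
separated from `C` by `supp X`; pushing a closer point of `sameSide (supp X) w` slightly towards
`w` produces such a chamber, so `x_C` is nearest on `sameSide (supp X) w`, hence on the flat
`⋂ (supp X ∩ Z) ⊇ ⋂ Z`. Genericity (ii) forces these flats to be equal, so `X ⊆ ⋂ Z`.
-/

open Filter Topology AffineMap

lemma sign_eq_sign_iff_mul_pos {a b : ℝ} (hb : b ≠ 0) :
    SignType.sign a = SignType.sign b ↔ 0 < b * a := by
  rcases hb.lt_or_gt with hb | hb
  · simp [sign_neg hb, sign_eq_neg_one_iff, mul_pos_iff, hb, hb.not_gt]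
  · simp [sign_pos hb, sign_eq_one_iff, hb]

lemma tendsto_lineMap_nhdsGT {P : Type*} [NormedAddCommGroup P] [NormedSpace ℝ P] (p q : P) :
    Tendsto (lineMap p q) (𝓝[>] (0 : ℝ)) (𝓝 p) :=
  (lineMap_continuous.tendsto' 0 p (lineMap_apply_zero p q)).mono_left nhdsWithin_le_nhds

lemma dist_le_of_le_dist_lineMap {P : Type*} [NormedAddCommGroup P] [NormedSpace ℝ P]
    {x p q : P} {t : ℝ} (ht₀ : 0 < t) (ht₁ : t ≤ 1) (h : dist x p ≤ dist x (lineMap p q t)) :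
    dist x p ≤ dist x q := by
  have hconv := (convexOn_dist x convex_univ).2 (mem_univ p) (mem_univ q)
    (sub_nonneg.2 ht₁) ht₀.le (sub_add_cancel 1 t)
  rw [← lineMap_apply_module] at hconv
  simp only [smul_eq_mul, dist_comm _ x] at hconv
  nlinarith

lemma IsMinOn.infDist_eq {α : Type*} [PseudoMetricSpace α] {s : Set α} {x p : α} (hp : p ∈ s)
    (h : IsMinOn (dist x) s p) : infDist x s = dist x p :=
  (infDist_le_dist_of_mem hp).antisymm ((le_infDist ⟨p, hp⟩).2 fun _ hy => isMinOn_iff.1 h _ hy)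

namespace Arrangement

variable {n : ℕ} {ι : Type} (A : Arrangement n ι)

local notation "E" => EuclideanSpace ℝ (Fin n)

def IsRegular (x : E) : Prop := ∀ i, A.val i x ≠ 0

def flat (Z : Set ι) : Set E := ⋂ i ∈ Z, A.hyperplane i

def sameSide (W : Set ι) (w : E) : Set E := {z | ∀ i ∈ W, 0 ≤ A.val i w * A.val i z}

def valAff (i : ι) : E →ᵃ[ℝ] ℝ :=
  (innerₛₗ ℝ (A.a i)).toAffineMap - AffineMap.const ℝ E (A.b i)

lemma valAff_apply (i : ι) (x : E) : A.valAff i x = A.val i x := rfl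

lemma continuous_val (i : ι) : Continuous (A.val i) :=
  (continuous_const.inner continuous_id).sub continuous_const

lemma val_lineMap (i : ι) (p q : E) (t : ℝ) :
    A.val i (lineMap p q t) = (1 - t) * A.val i p + t * A.val i q := by
  rw [← valAff_apply, AffineMap.apply_lineMap, lineMap_apply_module, smul_eq_mul, smul_eq_mul]
  rfl

lemma mem_supp_singleton {i : ι} {p : E} : i ∈ A.supp {p} ↔ A.val i p = 0 := by
  simp [supp, hyperplane]

lemma eventually_mul_val_pos (q : E) :
    ∀ᶠ z in 𝓝 q, ∀ i, A.val i q ≠ 0 → 0 < A.val i q * A.val i z := by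
  obtain ⟨ε, hε, hfin⟩ := A.locFin q
  have hnear : ∀ᶠ z in 𝓝 q, ∀ i ∈ {i : ι | ∃ y ∈ ball q ε, (inner ℝ (A.a i) y : ℝ) = A.b i},
      A.val i q ≠ 0 → 0 < A.val i q * A.val i z := by
    refine (eventually_all_finite hfin).2 fun i _ => ?_
    by_cases hq : A.val i q = 0
    · exact .of_forall fun _ h => absurd hq h
    · exact ((continuous_const.mul (A.continuous_val i)).tendsto q).eventually
        (lt_mem_nhds (mul_self_pos.2 hq)) |>.mono fun _ h _ => h
  filter_upwards [hnear, ball_mem_nhds q hε] with z hz hzq i hi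
  by_cases hI : ∃ y ∈ ball q ε, (inner ℝ (A.a i) y : ℝ) = A.b i
  · exact hz i hI hi
  · -- the hyperplane misses the ball, so `val i` keeps its sign on it
    by_contra hle
    obtain ⟨y, hy, hy0⟩ := (convex_ball q ε).isPreconnected.intermediate_value₂
      (mem_ball_self hε) hzq continuousOn_const
      (continuous_const.mul (A.continuous_val i)).continuousOn
      (mul_self_nonneg (A.val i q)) (not_lt.1 hle)
    refine hI ⟨y, hy, ?_⟩
    have := (mul_eq_zero.1 hy0.symm).resolve_left hi
    rwa [val, sub_eq_zero] at this

lemma eventually_isRegular_lineMap (p : E) {w : E} (hw : A.IsRegular w) :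
    ∀ᶠ t in 𝓝[>] (0 : ℝ), A.IsRegular (lineMap p w t) := by
  filter_upwards [(tendsto_lineMap_nhdsGT p w).eventually (A.eventually_mul_val_pos p),
    self_mem_nhdsWithin] with t ht (ht₀ : 0 < t) i
  by_cases hp : A.val i p = 0
  · rw [val_lineMap, hp, mul_zero, zero_add]
    exact mul_ne_zero ht₀.ne' (hw i)
  · exact right_ne_zero_of_mul (ht i hp).ne'

lemma openCell_signAt {w : E} (hw : A.IsRegular w) :
    A.openCell (A.signAt w) = {z | ∀ i, 0 < A.val i w * A.val i z} := by
  ext z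
  exact forall_congr' fun i => sign_eq_sign_iff_mul_pos (hw i)

lemma isClosed_sameSide (W : Set ι) (w : E) : IsClosed (A.sameSide W w) := by
  simp only [sameSide, ofPred_forall]
  exact isClosed_biInter fun i _ =>
    isClosed_le continuous_const (continuous_const.mul (A.continuous_val i))

lemma closure_openCell_signAt {w : E} (hw : A.IsRegular w) :
    closure (A.openCell (A.signAt w)) = A.sameSide univ w := by
  rw [A.openCell_signAt hw]
  refine subset_antisymm (closure_minimal (fun z hz i _ => (hz i).le) (A.isClosed_sameSide _ _))
    fun z hz => mem_closure_of_tendsto (tendsto_lineMap_nhdsGT z w) ?_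
  filter_upwards [Ioo_mem_nhdsGT one_pos] with t ht i
  rw [val_lineMap, mul_add, mul_left_comm, mul_left_comm _ t]
  exact add_pos_of_nonneg_of_pos (mul_nonneg (sub_nonneg.2 ht.2.le) (hz i trivial))
    (mul_pos ht.1 (mul_self_pos.2 (hw i)))

lemma self_mem_sameSide (W : Set ι) (w : E) : w ∈ A.sameSide W w :=
  fun i _ => mul_self_nonneg (A.val i w)

lemma isChamber_iff {C : Set E} : A.IsChamber C ↔ ∃ w, A.IsRegular w ∧ C = A.sameSide univ w :=
  exists_congr fun w => and_congr_right fun hw => by rw [A.closure_openCell_signAt hw]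

lemma val_add_smul_normal (i : ι) (z : E) (c : ℝ) :
    A.val i (z + c • A.a i) = A.val i z + c * ‖A.a i‖ ^ 2 := by
  simp only [val, inner_add_right, real_inner_smul_right, real_inner_self_eq_norm_sq]
  ring

lemma mul_val_pos_of_mem_interior {W : Set ι} {w z : E} (hz : z ∈ interior (A.sameSide W w))
    {i : ι} (hi : i ∈ W) (hw : A.val i w ≠ 0) : 0 < A.val i w * A.val i z := by
  refine (interior_subset hz i hi).lt_of_ne fun h0 => ?_
  have hz0 : A.val i z = 0 := (mul_eq_zero.1 h0.symm).resolve_left hw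
  -- pushing `z` slightly across the `i`-th hyperplane leaves the side of `w`
  have hpush : Tendsto (fun t : ℝ => z + (-(t * A.val i w)) • A.a i) (𝓝[>] 0) (𝓝 z) :=
    (Continuous.tendsto' (by fun_prop) 0 z (by simp)).mono_left nhdsWithin_le_nhds
  obtain ⟨t, ht, ht₀⟩ :=
    ((hpush.eventually (mem_interior_iff_mem_nhds.1 hz)).and self_mem_nhdsWithin).exists
  have := ht i hi
  rw [val_add_smul_normal, hz0] at this
  have hpos : 0 < t * A.val i w ^ 2 * ‖A.a i‖ ^ 2 := by
    have := A.ha i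
    positivity
  nlinarith

lemma self_mem_interior_sameSide {w : E} (hw : A.IsRegular w) :
    w ∈ interior (A.sameSide univ w) :=
  mem_interior_iff_mem_nhds.2 <|
    (A.eventually_mul_val_pos w).mono fun _ hz i _ => (hz i (hw i)).le

lemma mem_sep_sameSide_iff {w w' : E} (hw : A.IsRegular w) (hw' : A.IsRegular w') {i : ι} :
    i ∈ A.sep (A.sameSide univ w) (A.sameSide univ w') ↔ A.val i w * A.val i w' < 0 := by
  refine ⟨fun h => h w (A.self_mem_interior_sameSide hw) w' (A.self_mem_interior_sameSide hw'),
    fun h x hx y hy => ?_⟩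
  have hx := A.mul_val_pos_of_mem_interior hx (mem_univ i) (hw i)
  have hy := A.mul_val_pos_of_mem_interior hy (mem_univ i) (hw' i)
  nlinarith [mul_pos hx hy]

lemma sameSide_subset {V W : Set ι} {w w' : E} (hWV : W ⊆ V)
    (h : ∀ i ∈ W, 0 < A.val i w * A.val i w') : A.sameSide V w' ⊆ A.sameSide W w :=
  fun z hz i hi => by
    nlinarith [h i hi, hz i (hWV hi), mul_self_pos.2 (right_ne_zero_of_mul (h i hi).ne')]

lemma exists_mul_val_neg_of_ne {w w' : E} (hw : A.IsRegular w) (hw' : A.IsRegular w')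
    (hne : A.sameSide univ w ≠ A.sameSide univ w') : ∃ i, A.val i w * A.val i w' < 0 := by
  by_contra! h
  have hpos : ∀ i, 0 < A.val i w * A.val i w' :=
    fun i => (h i).lt_of_ne (mul_ne_zero (hw i) (hw' i)).symm
  refine hne (subset_antisymm (A.sameSide_subset subset_rfl fun i _ => ?_)
    (A.sameSide_subset subset_rfl fun i _ => hpos i))
  rw [mul_comm]
  exact hpos i

lemma val_eq_zero_of_mem_sameSide {w w' x : E} (hx : x ∈ A.sameSide univ w)
    (hx' : x ∈ A.sameSide univ w') {i : ι} (hi : A.val i w * A.val i w' < 0) :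
    A.val i x = 0 := by
  by_contra hx0
  nlinarith [mul_nonneg (hx i trivial) (hx' i trivial), mul_self_pos.2 hx0]

lemma flat_anti {Z Z' : Set ι} (h : Z ⊆ Z') : A.flat Z' ⊆ A.flat Z :=
  biInter_subset_biInter_left h

lemma subset_flat_supp (X : Set E) : X ⊆ A.flat (A.supp X) :=
  subset_iInter₂ fun _ hi => hi

lemma mem_flat_supp_singleton (x : E) : x ∈ A.flat (A.supp {x}) :=
  A.subset_flat_supp {x} rfl

lemma isFlat_flat {Z : Set ι} (h : (A.flat Z).Nonempty) : A.IsFlat (A.flat Z) := ⟨h, Z, rfl⟩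

lemma isClosed_flat (Z : Set ι) : IsClosed (A.flat Z) :=
  isClosed_biInter fun i _ => isClosed_eq (A.continuous_val i) continuous_const

lemma flat_subset_sameSide (W : Set ι) (w : E) : A.flat W ⊆ A.sameSide W w :=
  fun z hz i hi => by rw [show A.val i z = 0 from mem_iInter₂.1 hz i hi, mul_zero]

lemma openCell_signAt_subset_flat (y : E) : A.openCell (A.signAt y) ⊆ A.flat (A.supp {y}) :=
  fun z hz => mem_iInter₂.2 fun i hi => by
    have : SignType.sign (A.val i z) = SignType.sign (A.val i y) := hz i
    rwa [A.mem_supp_singleton.1 hi, sign_zero, sign_eq_zero_iff] at this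

lemma closure_openCell_signAt_subset_flat (y : E) :
    closure (A.openCell (A.signAt y)) ⊆ A.flat (A.supp {y}) :=
  closure_minimal (A.openCell_signAt_subset_flat y) (A.isClosed_flat _)

lemma openCell_signAt_subset_sameSide {W : Set ι} {w x : E} (hx : x ∈ A.sameSide W w) :
    A.openCell (A.signAt x) ⊆ A.sameSide W w := fun z hz i hi => by
  by_cases hxi : A.val i x = 0
  · rw [show A.val i z = 0 from mem_iInter₂.1 (A.openCell_signAt_subset_flat x hz) i
      (A.mem_supp_singleton.2 hxi), mul_zero]
  · nlinarith [hx i hi, (sign_eq_sign_iff_mul_pos hxi).1 (hz i), mul_self_pos.2 hxi]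

lemma flat_subset_affineSpan_openCell (y : E) :
    A.flat (A.supp {y}) ⊆ affineSpan ℝ (A.openCell (A.signAt y)) := by
  intro z hz
  obtain ⟨t, ht, ht₀⟩ := (((tendsto_lineMap_nhdsGT y z).eventually
    (A.eventually_mul_val_pos y)).and self_mem_nhdsWithin).exists
  have hmem : lineMap y z t ∈ A.openCell (A.signAt y) := fun i => by
    by_cases hyi : A.val i y = 0
    · have hzi : A.val i z = 0 := mem_iInter₂.1 hz i (A.mem_supp_singleton.2 hyi)
      simp [signAt, val_lineMap, hyi, hzi]
    · exact (sign_eq_sign_iff_mul_pos hyi).2 (ht i hyi)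
  have hz : z = lineMap y (lineMap y z t) t⁻¹ := by
    rw [lineMap_lineMap_right, inv_mul_cancel₀ (ne_of_gt ht₀), lineMap_apply_one]
  rw [hz]
  exact AffineMap.lineMap_mem _ (subset_affineSpan ℝ _ fun i => rfl)
    (subset_affineSpan ℝ _ hmem)

lemma coe_affineSpan_closure_openCell (y : E) :
    (affineSpan ℝ (closure (A.openCell (A.signAt y))) : Set E) = A.flat (A.supp {y}) := by
  refine subset_antisymm (fun z hz => mem_iInter₂.2 fun i hi => ?_)
    ((A.flat_subset_affineSpan_openCell y).trans (affineSpan_mono ℝ subset_closure))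
  have hvanish :
      EqOn (A.valAff i) (AffineMap.const ℝ E 0) (closure (A.openCell (A.signAt y))) :=
    fun x hx => mem_iInter₂.1 (A.closure_openCell_signAt_subset_flat y hx) i hi
  exact AffineMap.eqOn_affineSpan hvanish hz

lemma coe_affineSpan_eq_flat_of_minimal {w x : E} {F : Set E} (hx : x ∈ A.sameSide univ w)
    (hF : A.IsFaceOf F (A.sameSide univ w)) (hxF : x ∈ F)
    (hmin : ∀ F', A.IsFaceOf F' (A.sameSide univ w) → x ∈ F' → F ⊆ F') :
    (affineSpan ℝ F : Set E) = A.flat (A.supp {x}) := by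
  obtain ⟨y, rfl⟩ := hF.1
  have hface : A.IsFaceOf (closure (A.openCell (A.signAt x))) (A.sameSide univ w) :=
    ⟨⟨x, rfl⟩, closure_minimal (A.openCell_signAt_subset_sameSide hx) (A.isClosed_sameSide _ _)⟩
  have hspan := affineSpan_mono ℝ (hmin _ hface (subset_closure fun _ => rfl))
  rw [← SetLike.coe_subset_coe, coe_affineSpan_closure_openCell,
    coe_affineSpan_closure_openCell] at hspan
  rw [coe_affineSpan_closure_openCell]
  refine hspan.antisymm (A.flat_anti fun i hi => A.mem_supp_singleton.2 ?_)
  exact mem_iInter₂.1 (A.closure_openCell_signAt_subset_flat y hxF) i hi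

lemma isMinOn_sameSide_inter_supp {W : Set ι} {w x p : E} (hp : p ∈ A.sameSide W w)
    (hmin : IsMinOn (dist x) (A.sameSide W w) p) :
    IsMinOn (dist x) (A.sameSide (W ∩ A.supp {p}) w) p := by
  refine isMinOn_iff.2 fun q hq => ?_
  -- near `p` only the hyperplanes through `p` constrain the segment from `p` to `q`
  have hseg : ∀ᶠ t in 𝓝[>] (0 : ℝ), 0 < t ∧ t ≤ 1 ∧ lineMap p q t ∈ A.sameSide W w := by
    filter_upwards [(tendsto_lineMap_nhdsGT p q).eventually (A.eventually_mul_val_pos p),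
      Ioo_mem_nhdsGT one_pos] with t hnear ht
    refine ⟨ht.1, ht.2.le, fun i hi => ?_⟩
    by_cases hpi : A.val i p = 0
    · rw [val_lineMap, hpi, mul_zero, zero_add, mul_left_comm]
      exact mul_nonneg ht.1.le (hq i ⟨hi, A.mem_supp_singleton.2 hpi⟩)
    · nlinarith [hp i hi, hnear i hpi, mul_self_pos.2 hpi]
  obtain ⟨t, ht₀, ht₁, hmem⟩ := hseg.exists
  exact dist_le_of_le_dist_lineMap ht₀ ht₁ (isMinOn_iff.1 hmin _ hmem)

lemma isMinOn_sameSide_of_forall_mul_val_neg {W : Set ι} {w x p : E} (hw : A.IsRegular w)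
    (h : ∀ y, A.IsRegular y → dist x y < dist x p → ∃ i ∈ W, A.val i w * A.val i y < 0) :
    IsMinOn (dist x) (A.sameSide W w) p := by
  refine isMinOn_iff.2 fun q hq => not_lt.1 fun hlt => ?_
  -- moving `q` slightly towards `w` gives a regular point, still closer than `p`
  have hnear : ∀ᶠ z in 𝓝 q, dist x z < dist x p :=
    (continuous_const.dist continuous_id).continuousAt.eventually_lt continuousAt_const hlt
  obtain ⟨t, ⟨hreg, hd⟩, ht⟩ := ((A.eventually_isRegular_lineMap q hw).and
    ((tendsto_lineMap_nhdsGT q w).eventually hnear) |>.and (Ioo_mem_nhdsGT one_pos)).exists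
  obtain ⟨i, hi, hneg⟩ := h _ hreg hd
  rw [val_lineMap, mul_add, mul_left_comm, mul_left_comm _ t] at hneg
  nlinarith [mul_nonneg (sub_nonneg.2 ht.2.le) (hq i hi), mul_pos ht.1 (mul_self_pos.2 (hw i))]

variable {A}

lemma IsGeneric.eq_of_isMinOn {x₀ : E} (hgen : A.IsGeneric x₀) {L L' : Set E} (hL : A.IsFlat L)
    (hL' : A.IsFlat L') (hsub : L' ⊆ L) {p : E} (hp : p ∈ L') (hmin : IsMinOn (dist x₀) L p) :
    L' = L := by
  by_contra hne
  have hlt := hgen.2 L L' hL hL' (hsub.ssubset_of_ne hne)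
  rw [hmin.infDist_eq (hsub hp)] at hlt
  exact (infDist_le_dist_of_mem hp).not_gt hlt

lemma IsChamberOrder.lt_of_infDist_lt {lt : Set E → Set E → Prop} (hord : A.IsChamberOrder lt)
    {x₀ : E} (hcomp : ∀ C C', A.IsChamber C → A.IsChamber C' → lt C C' →
      infDist x₀ C ≤ infDist x₀ C')
    {C C' : Set E} (hC : A.IsChamber C) (hC' : A.IsChamber C')
    (hd : infDist x₀ C' < infDist x₀ C) : lt C' C :=
  (hord.1 C' C hC' hC (by rintro rfl; exact lt_irrefl _ hd)).resolve_right
    fun h => (hcomp C C' hC hC' h).not_gt hd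

lemma subset_flat_of_mem_J {x₀ : E} (hgen : A.IsGeneric x₀) {lt : Set E → Set E → Prop}
    (hord : A.IsChamberOrder lt)
    (hcomp : ∀ C C', A.IsChamber C → A.IsChamber C' → lt C C' → infDist x₀ C ≤ infDist x₀ C')
    {w x : E} (hw : A.IsRegular w) (hx : x ∈ A.sameSide univ w)
    (hmin : IsMinOn (dist x₀) (A.sameSide univ w) x) {X : Set E}
    (hX : X ∈ A.J lt (A.sameSide univ w)) : X ⊆ A.flat (A.supp {x}) := by
  have hC := A.isChamber_iff.2 ⟨w, hw, rfl⟩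
  have hminX : IsMinOn (dist x₀) (A.sameSide (A.supp X) w) x :=
    A.isMinOn_sameSide_of_forall_mul_val_neg hw fun y hy hyx => by
      have hC' := A.isChamber_iff.2 ⟨y, hy, rfl⟩
      have hd : infDist x₀ (A.sameSide univ y) < infDist x₀ (A.sameSide univ w) := by
        rw [hmin.infDist_eq hx]
        exact (infDist_le_dist_of_mem (A.self_mem_sameSide univ y)).trans_lt hyx
      obtain ⟨i, hiX, hi⟩ := hX.2 _ hC' (hord.lt_of_infDist_lt hcomp hC hC' hd)
      exact ⟨i, hiX, (A.mem_sep_sameSide_iff hw hy).1 hi⟩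
  have hxL : x ∈ A.flat (A.supp X ∩ A.supp {x}) :=
    A.flat_anti inter_subset_right (A.mem_flat_supp_singleton x)
  have hminL : IsMinOn (dist x₀) (A.flat (A.supp X ∩ A.supp {x})) x :=
    (A.isMinOn_sameSide_inter_supp (fun i _ => hx i trivial) hminX).on_subset
      (A.flat_subset_sameSide _ w)
  have heq : A.flat (A.supp {x}) = A.flat (A.supp X ∩ A.supp {x}) :=
    hgen.eq_of_isMinOn (A.isFlat_flat ⟨x, hxL⟩) (A.isFlat_flat ⟨x, A.mem_flat_supp_singleton x⟩)
      (A.flat_anti inter_subset_right) (A.mem_flat_supp_singleton x) hminL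
  calc X ⊆ A.flat (A.supp X) := A.subset_flat_supp X
    _ ⊆ A.flat (A.supp X ∩ A.supp {x}) := A.flat_anti inter_subset_left
    _ = A.flat (A.supp {x}) := heq.symm

lemma mem_J_of_subset_flat {x₀ : E} (hgen : A.IsGeneric x₀) {lt : Set E → Set E → Prop}
    (hord : A.IsChamberOrder lt)
    (hcomp : ∀ C C', A.IsChamber C → A.IsChamber C' → lt C C' → infDist x₀ C ≤ infDist x₀ C')
    {w x : E} (hw : A.IsRegular w) (hx : x ∈ A.sameSide univ w)
    (hmin : IsMinOn (dist x₀) (A.sameSide univ w) x) {X : Set E} (hX : A.IsFlat X)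
    (hXx : X ⊆ A.flat (A.supp {x})) : X ∈ A.J lt (A.sameSide univ w) := by
  refine ⟨hX, fun C' hC' hlt => ?_⟩
  obtain ⟨w', hw', rfl⟩ := A.isChamber_iff.1 hC'
  have hC := A.isChamber_iff.2 ⟨w, hw, rfl⟩
  by_contra hdisj
  have hsame : ∀ i ∈ A.supp {x}, 0 < A.val i w * A.val i w' := fun i hi => by
    have hiX : i ∈ A.supp X := hXx.trans (biInter_subset_of_mem hi)
    have hns : ¬ A.val i w * A.val i w' < 0 :=
      fun h => hdisj ⟨i, hiX, (A.mem_sep_sameSide_iff hw hw').2 h⟩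
    exact (not_lt.1 hns).lt_of_ne (mul_ne_zero (hw i) (hw' i)).symm
  -- so `C'` lies in the cone at `x` cut out by the hyperplanes through `x`
  have hminx : IsMinOn (dist x₀) (A.sameSide (A.supp {x}) w) x := by
    simpa only [univ_inter] using A.isMinOn_sameSide_inter_supp hx hmin
  have hd : infDist x₀ (A.sameSide univ w) = infDist x₀ (A.sameSide univ w') := by
    refine le_antisymm ?_ (hcomp _ _ hC' hC hlt)
    rw [hmin.infDist_eq hx]
    exact (le_infDist ⟨w', A.self_mem_sameSide univ w'⟩).2 fun z hz =>
      isMinOn_iff.1 hminx z (A.sameSide_subset (subset_univ _) hsame hz)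
  obtain ⟨p', hp', hp'd⟩ := (A.isClosed_sameSide univ w').exists_infDist_eq_dist
    ⟨w', A.self_mem_sameSide univ w'⟩ x₀
  have hxC' : x ∈ A.sameSide univ w' := (hgen.1 _ _ hC hC' hd x hx p' hp' (isMinOn_iff.1 hmin)
    fun q hq => hp'd ▸ infDist_le_dist_of_mem hq).2.2
  obtain ⟨j, hj⟩ := A.exists_mul_val_neg_of_ne hw hw' fun h => by
    rw [h] at hlt
    exact hord.2.1 _ hlt
  exact (hsame j (A.mem_supp_singleton.2 (A.val_eq_zero_of_mem_sameSide hx hxC' hj))).not_gt hj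

end Arrangement

/-- Every Euclidean order is valid: for a generic base point `x₀` and a total order on
chambers compatible with the distance from `x₀`, the ideal `J(C)` is the principal upper
ideal generated by `X_C = |F_C|`, where `F_C` is the smallest face of `C` containing the
projection of `x₀` onto `C`. -/
theorem stmt13 {n : ℕ} {ι : Type} (A : Arrangement n ι)
    (x₀ : EuclideanSpace ℝ (Fin n)) (hgen : A.IsGeneric x₀)
    (lt : Set (EuclideanSpace ℝ (Fin n)) → Set (EuclideanSpace ℝ (Fin n)) → Prop)
    (hord : A.IsChamberOrder lt)
    (hcomp : ∀ C C', A.IsChamber C → A.IsChamber C' → lt C C' →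
      infDist x₀ C ≤ infDist x₀ C')
    (C : Set (EuclideanSpace ℝ (Fin n))) (hC : A.IsChamber C)
    (x_C : EuclideanSpace ℝ (Fin n)) (hxC : x_C ∈ C)
    (hmin : ∀ q ∈ C, dist x₀ x_C ≤ dist x₀ q)
    (F_C : Set (EuclideanSpace ℝ (Fin n))) (hFC : A.IsFaceOf F_C C) (hxF : x_C ∈ F_C)
    (hsmall : ∀ F, A.IsFaceOf F C → x_C ∈ F → F_C ⊆ F) :
    A.J lt C =
      {X | A.IsFlat X ∧ X ⊆ (affineSpan ℝ F_C : Set (EuclideanSpace ℝ (Fin n)))} := by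
  obtain ⟨w, hw, rfl⟩ := A.isChamber_iff.1 hC
  have hmin' : IsMinOn (dist x₀) (A.sameSide univ w) x_C := isMinOn_iff.2 hmin
  rw [A.coe_affineSpan_eq_flat_of_minimal hxC hFC hxF hsmall]
  ext X
  exact ⟨fun hX => ⟨hX.1, Arrangement.subset_flat_of_mem_J hgen hord hcomp hw hxC hmin' hX⟩,
    fun hX => Arrangement.mem_J_of_subset_flat hgen hord hcomp hw hxC hmin' hX.1 hX.2⟩
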